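/- arXiv:2211.03133 — 2 statements merged into one kernel-verified Lean document; each statement's English description precedes it below -/
import Mathlib

section
/- For all integers n, s, k with n ≥ s ≥ 3 and k ≥ s−1, the graph S_{n,s−2} contains no matching of size k; consequently sat(n, M_k, K_s) = 0. -/
/-!
The first `s - 2` vertices of `S_{n,s-2}` cover all its edges, so a matching has at most `s - 2`
edges. The graph is `K_s`-saturated: a clique contains at most one vertex outside the first
`s - 2`, and adding an edge between two such vertices completes them, with the first `s - 2`,
to a `K_s`.
-/

/-- `sGraph n k` is the join `S_{n,k}` of the complete graph `K_k` with the empty graph on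
`n - k` vertices: the first `k` vertices of `Fin n` form a clique joined to the rest. -/
def sGraph (n k : ℕ) : SimpleGraph (Fin n) where
  Adj i j := i ≠ j ∧ ((i : ℕ) < k ∨ (j : ℕ) < k)
  symm := ⟨fun i j h => ⟨h.1.symm, h.2.symm⟩⟩
  loopless := ⟨fun i h => h.1 rfl⟩

/-- `G` is `K_s`-saturated: `G` has no `K_s` subgraph, but adding any edge between two
distinct nonadjacent vertices creates one. -/
def IsKSat {V : Type*} (G : SimpleGraph V) (s : ℕ) : Prop :=
  G.CliqueFree s ∧
    ∀ u v : V, u ≠ v → ¬ G.Adj u v →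
      ¬ (G ⊔ SimpleGraph.fromEdgeSet {s(u, v)}).CliqueFree s

/-- `numMatchings G k` is the number of copies of `M_k` in `G`, i.e. the number of
`k`-element sets of pairwise disjoint edges of `G`. -/
noncomputable def numMatchings {V : Type*} (G : SimpleGraph V) (k : ℕ) : ℕ :=
  Set.ncard {M : Finset (Sym2 V) | M.card = k ∧ (∀ e ∈ M, e ∈ G.edgeSet) ∧
    ∀ e ∈ M, ∀ f ∈ M, e ≠ f → ∀ v, v ∈ e → v ∉ f}

/-- `satM n k s` is the minimum number of copies of `M_k` over all `K_s`-saturated graphs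
on `n` vertices. -/
noncomputable def satM (n k s : ℕ) : ℕ :=
  sInf {m | ∃ G : SimpleGraph (Fin n), IsKSat G s ∧ numMatchings G k = m}

/-- `numIndepSets G ℓ` is the number of independent sets of size `ℓ` in `G`. -/
noncomputable def numIndepSets {V : Type*} (G : SimpleGraph V) (ℓ : ℕ) : ℕ :=
  Set.ncard {t : Finset V | t.card = ℓ ∧ ∀ v ∈ t, ∀ w ∈ t, ¬ G.Adj v w}

/-- `numCliques G r` is the number of copies of `K_r` in `G`, i.e. the number of
`r`-element vertex subsets inducing a complete graph. -/
noncomputable def numCliques {V : Type*} (G : SimpleGraph V) (r : ℕ) : ℕ :=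
  Set.ncard {t : Finset V | t.card = r ∧ G.IsClique (t : Set V)}

open Finset SimpleGraph

lemma card_le_card_of_forall_exists_mem_of_pairwise_disjoint {V : Type*} {M : Finset (Sym2 V)}
    {C : Finset V} (hdisj : ∀ e ∈ M, ∀ f ∈ M, e ≠ f → ∀ v, v ∈ e → v ∉ f)
    (hC : ∀ e ∈ M, ∃ v ∈ C, v ∈ e) : #M ≤ #C :=
  card_le_card_of_forall_subsingleton (fun e v => v ∈ e) hC fun v _ e he f hf =>
    by_contra fun hef => hdisj e he.1 f hf.1 hef v he.2 hf.2

lemma numMatchings_eq_zero_of_card_lt {V : Type*} {G : SimpleGraph V} {k : ℕ} (C : Finset V)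
    (hC : ∀ e ∈ G.edgeSet, ∃ v ∈ C, v ∈ e) (hk : #C < k) : numMatchings G k = 0 := by
  rw [numMatchings]
  convert Set.ncard_empty (Finset (Sym2 V))
  refine Set.eq_empty_of_forall_notMem ?_
  rintro M ⟨hcard, hedge, hdisj⟩
  have := card_le_card_of_forall_exists_mem_of_pairwise_disjoint hdisj fun e he => hC e (hedge e he)
  omega

lemma numMatchings_sGraph_eq_zero {n m k : ℕ} (hk : m < k) : numMatchings (sGraph n m) k = 0 := by
  refine numMatchings_eq_zero_of_card_lt {i : Fin n | (i : ℕ) < m} ?_ ?_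
  · refine Sym2.ind fun a b hab => ?_
    rcases (mem_edgeSet _).1 hab |>.2 with ha | hb
    · exact ⟨a, by simpa using ha, Sym2.mem_mk_left a b⟩
    · exact ⟨b, by simpa using hb, Sym2.mem_mk_right a b⟩
  · rw [Fin.card_filter_val_lt]
    omega

lemma sGraph_isClique_iff {n m : ℕ} {s : Set (Fin n)} :
    (sGraph n m).IsClique s ↔
      ∀ a ∈ s, ∀ b ∈ s, m ≤ (a : ℕ) → m ≤ (b : ℕ) → a = b := by
  refine ⟨fun hs a ha b hb ham hbm => ?_, fun hs a ha b hb hab => ⟨hab, ?_⟩⟩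
  · by_contra hab
    have := (hs ha hb hab).2
    omega
  · by_contra! hlow
    exact hab (hs a ha b hb hlow.1 hlow.2)

lemma sGraph_cliqueFree (n m : ℕ) : (sGraph n m).CliqueFree (m + 2) := by
  intro t ht
  have hlow : #(t.filter fun i : Fin n => (i : ℕ) < m) ≤ m := calc
    _ ≤ #({i | (i : ℕ) < m} : Finset (Fin n)) :=
      card_le_card (filter_subset_filter _ (subset_univ t))
    _ ≤ m := Fin.card_filter_val_lt.trans_le (min_le_right _ _)
  have hhigh : #(t.filter fun i : Fin n => ¬ (i : ℕ) < m) ≤ 1 :=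
    card_le_one.2 fun a ha b hb => by
      rw [mem_filter, not_lt] at ha hb
      exact sGraph_isClique_iff.1 ht.1 a ha.1 b hb.1 ha.2 hb.2
  have := card_filter_add_card_filter_not (s := t) (fun i : Fin n => (i : ℕ) < m)
  have := ht.2
  omega

lemma isKSat_sGraph (n m : ℕ) : IsKSat (sGraph n m) (m + 2) := by
  refine ⟨sGraph_cliqueFree n m, fun u v huv hadj hfree => ?_⟩
  have hhigh : m ≤ (u : ℕ) ∧ m ≤ (v : ℕ) := by
    simp only [sGraph, ne_eq, huv, not_false_eq_true, true_and, not_or, not_lt] at hadj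
    exact hadj
  set C : Finset (Fin n) := {i | (i : ℕ) < m}
  have hC : #C = m := by
    rw [Fin.card_filter_val_lt]
    omega
  refine hfree (insert u (insert v C)) ⟨?_, ?_⟩
  · rw [coe_insert, coe_insert, ← edge, isClique_sup_edge_of_ne_iff huv]
    constructor <;> rw [sGraph_isClique_iff] <;> intro a ha b hb ha' hb' <;>
      simp [C] at ha hb <;> omega
  · rw [card_insert_of_notMem, card_insert_of_notMem, hC] <;> simp [C, huv] <;> omega

theorem stmt_7_general (n s k : ℕ) (hs : 3 ≤ s) (hk : s - 1 ≤ k) :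
    numMatchings (sGraph n (s - 2)) k = 0 ∧ satM n k s = 0 := by
  obtain ⟨m, rfl⟩ : ∃ m, s = m + 2 := ⟨s - 2, by omega⟩
  rw [Nat.add_sub_cancel]
  have hm : numMatchings (sGraph n m) k = 0 := numMatchings_sGraph_eq_zero (by omega)
  exact ⟨hm, Nat.sInf_eq_zero.2 (Or.inl ⟨sGraph n m, isKSat_sGraph n m, hm⟩)⟩

/-- For `n ≥ s ≥ 3` and `k ≥ s - 1`, the graph `S_{n,s-2}` has no matching of size `k`;
consequently `sat(n, M_k, K_s) = 0`. -/
theorem stmt_7 (n s k : ℕ) (hs : 3 ≤ s) (hn : s ≤ n) (hk : s - 1 ≤ k) :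
    numMatchings (sGraph n (s - 2)) k = 0 ∧ satM n k s = 0 :=
  stmt_7_general n s k hs hk
end

section
/- Let s ≥ 3, let G be a K_s-saturated graph on n vertices, and suppose G contains a subgraph H isomorphic to S_{n₁,s−2} with n₁ < n such that G contains no subgraph isomorphic to S_{n₁+1,s−2} (i.e., H is a maximum such subgraph). Let I be the independent part of H (the n₁−s+2 vertices of H outside its (s−2)-clique). Then every vertex v ∈ I has at least one neighbor in V(G) ∖ V(H). -/
/-!
Suppose `v = f i` in the independent part had all its neighbours inside the copy, and pick `u`
outside it. By saturation, `u` and `v` have `s - 2` common neighbours `C`. Each of them is a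
neighbour of `v`, hence lies in the copy, and not in its independent part: an edge between two
vertices of the independent part would complete the clique part to a `K_s`. So `C` is the whole
clique part, which is therefore joined to `u`, and appending `u` gives a copy of `S_{n₁+1,s-2}`.
-/

open SimpleGraph Finset Function

section Saturation

variable {V : Type*} {G : SimpleGraph V}

theorem IsKSat.maximal_cliqueFree {s : ℕ} (h : IsKSat G s) :
    Maximal (fun H : SimpleGraph V => H.CliqueFree s) G := by
  refine ⟨h.1, fun H hH hGH u v huv => ?_⟩
  by_contra hn
  exact h.2 u v huv.ne hn (hH.anti (sup_le hGH ((edge_le_iff H).2 (Or.inr huv))))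

theorem IsKSat.exists_common_neighbors [DecidableEq V] {k : ℕ} (h : IsKSat G (k + 2))
    {u v : V} (hne : u ≠ v) (hn : ¬ G.Adj u v) :
    ∃ C : Finset V, #C = k ∧ ∀ c ∈ C, G.Adj u c ∧ G.Adj v c := by
  obtain ⟨C, huC, hvC, hu, hv⟩ :=
    exists_of_maximal_cliqueFree_not_adj (n := k + 1) h.maximal_cliqueFree hne hn
  refine ⟨C, by simpa [card_insert_of_notMem huC] using hu.2, fun c hc => ⟨?_, ?_⟩⟩
  · exact hu.1 (mem_insert_self u C) (mem_insert_of_mem hc) (ne_of_mem_of_not_mem hc huC).symm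
  · exact hv.1 (mem_insert_self v C) (mem_insert_of_mem hc) (ne_of_mem_of_not_mem hc hvC).symm

end Saturation

section SGraphCopy

variable {V : Type*} {G : SimpleGraph V} {m k : ℕ} {f : Fin m → V}

theorem adj_snoc_of_sGraph_adj (hhom : ∀ a b, (sGraph m k).Adj a b → G.Adj (f a) (f b))
    {u : V} (hu : ∀ j : Fin m, (j : ℕ) < k → G.Adj (f j) u) (a b : Fin (m + 1))
    (hab : (sGraph (m + 1) k).Adj a b) :
    G.Adj (Fin.snoc (α := fun _ => V) f u a) (Fin.snoc (α := fun _ => V) f u b) := by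
  obtain ⟨hne, hlt⟩ := hab
  induction a using Fin.lastCases with
  | last =>
    induction b using Fin.lastCases with
    | last => exact absurd rfl hne
    | cast b =>
      simp only [Fin.snoc_last, Fin.snoc_castSucc]
      exact (hu b (by simp only [Fin.val_last, Fin.val_castSucc] at hlt; omega)).symm
  | cast a =>
    induction b using Fin.lastCases with
    | last =>
      simp only [Fin.snoc_last, Fin.snoc_castSucc]
      exact hu a (by simp only [Fin.val_last, Fin.val_castSucc] at hlt; omega)
    | cast b =>
      simp only [Fin.snoc_castSucc]
      exact hhom a b ⟨fun h => hne (congrArg _ h), hlt⟩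

variable [DecidableEq V]

def cliquePart (f : Fin m → V) (k : ℕ) : Finset V :=
  (univ.filter fun j : Fin m => (j : ℕ) < k).image f

theorem mem_cliquePart {c : V} :
    c ∈ cliquePart f k ↔ ∃ j : Fin m, (j : ℕ) < k ∧ f j = c := by
  simp [cliquePart]

theorem card_cliquePart_le : #(cliquePart f k) ≤ k :=
  card_image_le.trans (by simp [Fin.card_filter_val_lt])

theorem adj_of_mem_cliquePart (hhom : ∀ a b, (sGraph m k).Adj a b → G.Adj (f a) (f b))
    {c : V} (hc : c ∈ cliquePart f k) {b : Fin m} (hb : k ≤ (b : ℕ)) : G.Adj c (f b) := by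
  obtain ⟨j, hj, rfl⟩ := mem_cliquePart.1 hc
  exact hhom j b ⟨fun h => by omega, Or.inl hj⟩

theorem isNClique_cliquePart (hf : Injective f)
    (hhom : ∀ a b, (sGraph m k).Adj a b → G.Adj (f a) (f b)) (hk : k ≤ m) :
    G.IsNClique k (cliquePart f k) := by
  refine ⟨?_, ?_⟩
  · rintro _ hx _ hy hxy
    obtain ⟨a, ha, rfl⟩ := mem_cliquePart.1 hx
    obtain ⟨b, -, rfl⟩ := mem_cliquePart.1 hy
    exact hhom a b ⟨fun h => hxy (congrArg f h), Or.inl ha⟩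
  · rw [cliquePart, card_image_of_injective _ hf, Fin.card_filter_val_lt, min_eq_right hk]

theorem not_adj_of_cliqueFree_of_sGraph_hom (hG : G.CliqueFree (k + 2)) (hf : Injective f)
    (hhom : ∀ a b, (sGraph m k).Adj a b → G.Adj (f a) (f b)) {a b : Fin m}
    (ha : k ≤ (a : ℕ)) (hb : k ≤ (b : ℕ)) : ¬ G.Adj (f a) (f b) := by
  intro hab
  have hKb := (isNClique_cliquePart hf hhom (by omega)).insert
    fun c hc => (adj_of_mem_cliquePart hhom hc hb).symm
  refine (hKb.insert (a := f a) fun c hc => ?_).not_cliqueFree hG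
  obtain rfl | hc := mem_insert.1 hc
  · exact hab
  · exact (adj_of_mem_cliquePart hhom hc ha).symm

theorem IsKSat.adj_cliquePart_of_neighborSet_subset_range (hG : IsKSat G (k + 2))
    (hf : Injective f) (hhom : ∀ a b, (sGraph m k).Adj a b → G.Adj (f a) (f b)) {i : Fin m}
    (hi : k ≤ (i : ℕ)) (hN : G.neighborSet (f i) ⊆ Set.range f) {u : V}
    (hu : u ∉ Set.range f) {c : V} (hc : c ∈ cliquePart f k) : G.Adj c u := by
  obtain ⟨C, hCcard, hC⟩ :=
    hG.exists_common_neighbors (fun h => hu ⟨i, h⟩) (fun h => hu (hN h))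
  have hCK : C ⊆ cliquePart f k := by
    intro c hc
    obtain ⟨a, rfl⟩ := hN (hC c hc).1
    have ha : (a : ℕ) < k := by
      by_contra! ha
      exact not_adj_of_cliqueFree_of_sGraph_hom hG.1 hf hhom hi ha (hC _ hc).1
    exact mem_cliquePart.2 ⟨a, ha, rfl⟩
  have hCK : C = cliquePart f k := eq_of_subset_of_card_le hCK (hCcard ▸ card_cliquePart_le)
  exact (hC c (hCK ▸ hc)).2.symm

end SGraphCopy

/-- If `G` is `K_s`-saturated on `n` vertices and contains a copy of `S_{n₁,s-2}` with
`n₁ < n` which cannot be extended to a copy of `S_{n₁+1,s-2}`, then every vertex of the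
independent part of the copy has a neighbor outside the copy. -/
theorem stmt_16 {n : ℕ} (s : ℕ) (hs : 3 ≤ s) (G : SimpleGraph (Fin n)) (hG : IsKSat G s)
    (n₁ : ℕ) (hn₁ : n₁ < n) (f : Fin n₁ → Fin n) (hf : Function.Injective f)
    (hhom : ∀ a b, (sGraph n₁ (s - 2)).Adj a b → G.Adj (f a) (f b))
    (hmax : ¬ ∃ g : Fin (n₁ + 1) → Fin n, Function.Injective g ∧
      ∀ a b, (sGraph (n₁ + 1) (s - 2)).Adj a b → G.Adj (g a) (g b)) :
    ∀ i : Fin n₁, s - 2 ≤ (i : ℕ) → ∃ u : Fin n, u ∉ Set.range f ∧ G.Adj (f i) u := by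
  obtain ⟨k, rfl⟩ : ∃ k, s = k + 2 := ⟨s - 2, by omega⟩
  rw [Nat.add_sub_cancel] at hhom hmax ⊢
  intro i hi
  by_contra! hN
  obtain ⟨u, hu⟩ : ∃ u, u ∉ Set.range f := by
    by_contra! h
    exact hn₁.not_ge (by simpa using Fintype.card_le_of_surjective f h)
  have hNf : G.neighborSet (f i) ⊆ Set.range f := fun w hw => by_contra fun h => hN w h hw
  have huK (j : Fin n₁) (hj : (j : ℕ) < k) : G.Adj (f j) u :=
    hG.adj_cliquePart_of_neighborSet_subset_range hf hhom hi hNf hu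
      (mem_cliquePart.2 ⟨j, hj, rfl⟩)
  exact hmax ⟨Fin.snoc f u, Fin.snoc_injective_of_injective hf hu,
    adj_snoc_of_sGraph_adj hhom huK⟩
end
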